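/- Counting lemma: Let (X, f_{1,∞}) be an NDS, K ⊆ X, ε > 0, and φ continuous with s > ‖φ‖_∞. If M^P(f_{1,∞}, K, φ, ε, s) = +∞, then for any N ∈ ℕ and any interval (a,b) ⊆ [0,∞) with a ≥ 0 and a < b, there exists a finite pairwise disjoint collection of closed Bowen balls {B̄_{n_i}(x_i, ε)}_i with x_i ∈ K, n_i ≥ N for all i, and a < Σ_i exp(−s n_i + S_{n_i}φ(x_i)) < b. -/

import Mathlib

/-!
Every term `exp (-s n + S_n φ x)` with `n ≥ n₀` is at most `exp (-n₀ (s - ‖φ‖))`, which is below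
`b - a` once `n₀` is large. Since `M^P(…, N') = ∞` for `N' = max N n₀`, some finite disjoint family
has sum above `a`; discarding terms one at a time while the sum stays above `a` stops at a sum
below `a + (b - a) = b`.
-/

open Filter Set MeasureTheory Topology ENNReal

noncomputable section

variable {X : Type*}

/-- `traj f n = f (n-1) ∘ ⋯ ∘ f 0`, i.e. the time-`n` map `f_1^n` of the NDS. -/
def traj (f : ℕ → X → X) : ℕ → X → X
  | 0 => id
  | n + 1 => f n ∘ traj f n

/-- Birkhoff-type sum `S_n φ (x) = ∑_{i<n} φ(f_1^i x)`. -/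
def birk (f : ℕ → X → X) (φ : X → ℝ) (n : ℕ) (x : X) : ℝ :=
  ∑ i ∈ Finset.range n, φ (traj f i x)

variable [MetricSpace X]

/-- Open Bowen ball `B_n(x, ε)`. -/
def bowenBall (f : ℕ → X → X) (n : ℕ) (ε : ℝ) (x : X) : Set X :=
  {y | ∀ i < n, dist (traj f i x) (traj f i y) < ε}

/-- Closed Bowen ball `B̄_n(x, ε)`. -/
def bowenClosedBall (f : ℕ → X → X) (n : ℕ) (ε : ℝ) (x : X) : Set X :=
  {y | ∀ i < n, dist (traj f i x) (traj f i y) ≤ ε}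

/-- `M(f, K, φ, ε, s, N)`: infimum over countable Bowen-ball covers of `K`. -/
def pesinM (f : ℕ → X → X) (K : Set X) (φ : X → ℝ) (ε s : ℝ) (N : ℕ) : ℝ≥0∞ :=
  sInf { t | ∃ (c : ℕ → X) (m : ℕ → ℕ), (∀ i, N ≤ m i) ∧
    K ⊆ ⋃ i, bowenBall f (m i) ε (c i) ∧
    t = ∑' i, ENNReal.ofReal (Real.exp (-s * (m i : ℝ) + birk f φ (m i) (c i))) }

/-- `M(f, K, φ, ε, s) = lim_{N→∞} M(f, K, φ, ε, s, N)` (the quantity is nondecreasing in `N`). -/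
def pesinMLim (f : ℕ → X → X) (K : Set X) (φ : X → ℝ) (ε s : ℝ) : ℝ≥0∞ :=
  ⨆ N, pesinM f K φ ε s N

/-- Pesin pressure at scale `ε`: critical value of `s`. -/
def pesinPressureEps (f : ℕ → X → X) (K : Set X) (φ : X → ℝ) (ε : ℝ) : ℝ :=
  sInf {s : ℝ | pesinMLim f K φ ε s = 0}

/-- Pesin (Pesin–Pitskel'/Bowen) topological pressure `P^B(f_{1,∞}, K, φ)`. -/
def pesinPressure (f : ℕ → X → X) (K : Set X) (φ : X → ℝ) : ℝ :=
  limsup (fun ε => pesinPressureEps f K φ ε) (𝓝[>] (0 : ℝ))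

/-- `M^P(f, K, φ, ε, s, N)`: supremum over disjoint families of closed Bowen balls
centered in `K` with orders `≥ N`. -/
def packM (f : ℕ → X → X) (K : Set X) (φ : X → ℝ) (ε s : ℝ) (N : ℕ) : ℝ≥0∞ :=
  sSup { t | ∃ (c : ℕ → X) (m : ℕ → ℕ) (I : Set ℕ),
    (∀ i ∈ I, c i ∈ K ∧ N ≤ m i) ∧
    (I.PairwiseDisjoint fun i => bowenClosedBall f (m i) ε (c i)) ∧
    t = ∑' i : I, ENNReal.ofReal (Real.exp (-s * (m i.1 : ℝ) + birk f φ (m i.1) (c i.1))) }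

/-- `M^P(f, K, φ, ε, s) = lim_{N→∞} M^P(f, K, φ, ε, s, N)` (nonincreasing in `N`). -/
def packMLim (f : ℕ → X → X) (K : Set X) (φ : X → ℝ) (ε s : ℝ) : ℝ≥0∞ :=
  ⨅ N, packM f K φ ε s N

/-- `M^{P̃}(f, K, φ, ε, s)`: infimum over countable covers of `K`. -/
def packMTilde (f : ℕ → X → X) (K : Set X) (φ : X → ℝ) (ε s : ℝ) : ℝ≥0∞ :=
  sInf { t | ∃ Ks : ℕ → Set X, K ⊆ ⋃ i, Ks i ∧ t = ∑' i, packMLim f (Ks i) φ ε s }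

/-- Packing pressure at scale `ε`: critical value of `s`. -/
def packPressureEps (f : ℕ → X → X) (K : Set X) (φ : X → ℝ) (ε : ℝ) : ℝ :=
  sInf {s : ℝ | packMTilde f K φ ε s = 0}

/-- Packing topological pressure `P^P(f_{1,∞}, K, φ)`. -/
def packPressure (f : ℕ → X → X) (K : Set X) (φ : X → ℝ) : ℝ :=
  limsup (fun ε => packPressureEps f K φ ε) (𝓝[>] (0 : ℝ))

/-- `E` is `(n, ε)`-separated for the NDS. -/
def IsSeparated' (f : ℕ → X → X) (n : ℕ) (ε : ℝ) (E : Finset X) : Prop :=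
  ∀ x ∈ E, ∀ y ∈ E, x ≠ y → ∃ i < n, ε < dist (traj f i x) (traj f i y)

/-- `P_n(f, Z, φ, ε)`: sup over `(n,ε)`-separated subsets of `Z`. -/
def sepSum (f : ℕ → X → X) (Z : Set X) (φ : X → ℝ) (ε : ℝ) (n : ℕ) : ℝ :=
  sSup { t | ∃ E : Finset X, ↑E ⊆ Z ∧ IsSeparated' f n ε E ∧
    t = ∑ x ∈ E, Real.exp (birk f φ n x) }

/-- Classical topological pressure via separated sets. -/
def classicalPressureSep (f : ℕ → X → X) (Z : Set X) (φ : X → ℝ) : ℝ :=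
  limsup (fun ε => limsup (fun n => Real.log (sepSum f Z φ ε n) / n) atTop) (𝓝[>] (0 : ℝ))

/-- `Q_n(f, K, φ, ε)`: infimum over `(n,ε)`-spanning sets for `K`. -/
def spanSum (f : ℕ → X → X) (K : Set X) (φ : X → ℝ) (ε : ℝ) (n : ℕ) : ℝ :=
  sInf { t | ∃ E : Finset X,
    (∀ x ∈ K, ∃ y ∈ E, ∀ i < n, dist (traj f i y) (traj f i x) ≤ ε) ∧
    t = ∑ x ∈ E, Real.exp (birk f φ n x) }

/-- Classical topological pressure via spanning sets. -/
def classicalPressureSpan (f : ℕ → X → X) (K : Set X) (φ : X → ℝ) : ℝ :=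
  limsup (fun ε => limsup (fun n => Real.log (spanSum f K φ ε n) / n) atTop) (𝓝[>] (0 : ℝ))

/-- `Λ_{ε,N}(f, K, φ)`: infimum over countable covers of `K` by Bowen balls of order `N`. -/
def capLambda (f : ℕ → X → X) (K : Set X) (φ : X → ℝ) (ε : ℝ) (N : ℕ) : ℝ≥0∞ :=
  sInf { t | ∃ c : ℕ → X, K ⊆ ⋃ i, bowenBall f N ε (c i) ∧
    t = ∑' i, ENNReal.ofReal (Real.exp (birk f φ N (c i))) }

/-- Upper capacity topological pressure `CP̄(f_{1,∞}, K, φ)`. -/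
def upperCapPressure (f : ℕ → X → X) (K : Set X) (φ : X → ℝ) : ℝ :=
  limsup (fun ε =>
    limsup (fun N => Real.log (capLambda f K φ ε N).toReal / N) atTop) (𝓝[>] (0 : ℝ))

/-- Upper measure-theoretic local pressure `P̄_μ(f_{1,∞}, x, φ)`. -/
def upperLocalPressure [MeasurableSpace X] (μ : Measure X) (f : ℕ → X → X) (φ : X → ℝ)
    (x : X) : ℝ :=
  limsup (fun ε => limsup
    (fun n => (-Real.log ((μ (bowenBall f n ε x)).toReal) + birk f φ n x) / n) atTop)
    (𝓝[>] (0 : ℝ))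

/-- `μ` is `f_{1,∞}`-invariant: every map of the sequence preserves `μ`. -/
def IsInvSeq [MeasurableSpace X] (μ : Measure X) (f : ℕ → X → X) : Prop :=
  ∀ k, ∀ A : Set X, MeasurableSet A → μ (f k ⁻¹' A) = μ A

open Finset in
theorem exists_subset_sum_mem_Ioo {ι : Type*} {a b : ℝ} (ha : 0 ≤ a) (g : ι → ℝ) (J : Finset ι)
    (hg : ∀ i ∈ J, g i < b - a) (hJ : a < ∑ i ∈ J, g i) :
    ∃ J' ⊆ J, a < ∑ i ∈ J', g i ∧ ∑ i ∈ J', g i < b := by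
  classical
  induction J using Finset.strongInduction with
  | _ J ih =>
    by_cases herase : ∃ i ∈ J, a < ∑ j ∈ J.erase i, g j
    · obtain ⟨i, hi, hsum⟩ := herase
      obtain ⟨J', hJ', h⟩ := ih (J.erase i) (erase_ssubset hi)
        (fun j hj => hg j (mem_of_mem_erase hj)) hsum
      exact ⟨J', hJ'.trans (erase_subset i J), h⟩
    · push Not at herase
      obtain ⟨i, hi⟩ : J.Nonempty := by
        contrapose! hJ
        simpa [hJ] using ha
      exact ⟨J, subset_rfl, hJ, by linarith [add_sum_erase J g hi, herase i hi, hg i hi]⟩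

theorem birk_le_mul {Y : Type*} {f : ℕ → Y → Y} {φ : Y → ℝ} {C : ℝ} (hφ : ∀ y, φ y ≤ C)
    (n : ℕ) (y : Y) :
    birk f φ n y ≤ n * C := by
  simpa [birk] using Finset.sum_le_sum fun i (_ : i ∈ Finset.range n) => hφ (traj f i y)

theorem exp_packing_term_le {Y : Type*} {f : ℕ → Y → Y} {φ : Y → ℝ} {C : ℝ}
    (hφ : ∀ y, φ y ≤ C) {s : ℝ} (hC : C ≤ s) {n₀ n : ℕ} (hn : n₀ ≤ n) (y : Y) :
    Real.exp (-s * n + birk f φ n y) ≤ Real.exp (-(n₀ * (s - C))) := by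
  have hn' : (n₀ : ℝ) * (s - C) ≤ n * (s - C) := by gcongr
  gcongr
  linarith [birk_le_mul (f := f) hφ n y]

theorem exists_nat_exp_neg_mul_lt {δ η : ℝ} (hδ : 0 < δ) (hη : 0 < η) :
    ∃ n : ℕ, Real.exp (-(n * δ)) < η := by
  obtain ⟨n, hn⟩ := exists_nat_gt (-Real.log η / δ)
  refine ⟨n, (Real.exp_lt_exp.2 ?_).trans_eq (Real.exp_log hη)⟩
  linarith [(div_lt_iff₀ hδ).1 hn]

theorem exists_finset_of_ofReal_lt_packM {f : ℕ → X → X} {K : Set X}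
    {φ : X → ℝ} {ε s a : ℝ} {N : ℕ} (ha : 0 ≤ a) (h : ENNReal.ofReal a < packM f K φ ε s N) :
    ∃ (J : Finset ℕ) (c : ℕ → X) (m : ℕ → ℕ),
      (∀ i ∈ J, c i ∈ K ∧ N ≤ m i) ∧
      ((J : Set ℕ).PairwiseDisjoint fun i => bowenClosedBall f (m i) ε (c i)) ∧
      a < ∑ i ∈ J, Real.exp (-s * (m i : ℝ) + birk f φ (m i) (c i)) := by
  obtain ⟨_, ⟨c, m, I, hI, hdisj, rfl⟩, hlt⟩ := lt_sSup_iff.1 h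
  rw [ENNReal.tsum_eq_iSup_sum] at hlt
  obtain ⟨F, hF⟩ := lt_iSup_iff.1 hlt
  have hFI : ∀ i ∈ F.map (Function.Embedding.subtype _), i ∈ I := fun i hi => by
    obtain ⟨j, -, rfl⟩ := Finset.mem_map.1 hi
    exact j.2
  refine ⟨F.map (Function.Embedding.subtype _), c, m, fun i hi => hI i (hFI i hi),
    hdisj.subset fun i hi => hFI i hi, ?_⟩
  rw [Finset.sum_map]
  rwa [← ENNReal.ofReal_sum_of_nonneg (fun _ _ => (Real.exp_pos _).le),
    ENNReal.ofReal_lt_ofReal_iff_of_nonneg ha] at hF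

theorem packing_counting_lemma_general [CompactSpace X]
    (f : ℕ → X → X)
    (K : Set X) (φ : C(X, ℝ)) (ε s : ℝ) (hs : ‖φ‖ < s)
    (h : packMLim f K ⇑φ ε s = ⊤) :
    ∀ (N : ℕ) (a b : ℝ), 0 ≤ a → a < b →
      ∃ (J : Finset ℕ) (c : ℕ → X) (m : ℕ → ℕ),
        (∀ i ∈ J, c i ∈ K ∧ N ≤ m i) ∧
        ((J : Set ℕ).PairwiseDisjoint fun i => bowenClosedBall f (m i) ε (c i)) ∧
        a < ∑ i ∈ J, Real.exp (-s * (m i : ℝ) + birk f ⇑φ (m i) (c i)) ∧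
        ∑ i ∈ J, Real.exp (-s * (m i : ℝ) + birk f ⇑φ (m i) (c i)) < b := by
  intro N a b ha hab
  have hφ : ∀ x, φ x ≤ ‖φ‖ := fun x => (le_abs_self _).trans (φ.norm_coe_le_norm x)
  obtain ⟨n₀, hn₀⟩ := exists_nat_exp_neg_mul_lt (sub_pos.2 hs) (sub_pos.2 hab)
  have hM : packM f K φ ε s (max N n₀) = ⊤ := iInf_eq_top.1 h _
  obtain ⟨J, c, m, hJ, hdisj, hsum⟩ :=
    exists_finset_of_ofReal_lt_packM ha (hM ▸ ENNReal.ofReal_lt_top)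
  have hsmall : ∀ i ∈ J, Real.exp (-s * (m i : ℝ) + birk f φ (m i) (c i)) < b - a := fun i hi =>
    (exp_packing_term_le hφ hs.le ((le_max_right N n₀).trans (hJ i hi).2) _).trans_lt hn₀
  obtain ⟨J', hJ', hJ'a, hJ'b⟩ := exists_subset_sum_mem_Ioo ha _ J hsmall hsum
  exact ⟨J', c, m, fun i hi => ⟨(hJ i (hJ' hi)).1, (le_max_left N n₀).trans (hJ i (hJ' hi)).2⟩,
    hdisj.subset hJ', hJ'a, hJ'b⟩

/-- counting lemma for packing sums. -/
theorem packing_counting_lemma [CompactSpace X]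
    (f : ℕ → X → X) (hf : ∀ i, Continuous (f i))
    (K : Set X) (φ : C(X, ℝ)) (ε s : ℝ) (hε : 0 < ε) (hs : ‖φ‖ < s)
    (h : packMLim f K ⇑φ ε s = ⊤) :
    ∀ (N : ℕ) (a b : ℝ), 0 ≤ a → a < b →
      ∃ (J : Finset ℕ) (c : ℕ → X) (m : ℕ → ℕ),
        (∀ i ∈ J, c i ∈ K ∧ N ≤ m i) ∧
        ((J : Set ℕ).PairwiseDisjoint fun i => bowenClosedBall f (m i) ε (c i)) ∧
        a < ∑ i ∈ J, Real.exp (-s * (m i : ℝ) + birk f ⇑φ (m i) (c i)) ∧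
        ∑ i ∈ J, Real.exp (-s * (m i : ℝ) + birk f ⇑φ (m i) (c i)) < b :=
  packing_counting_lemma_general f K φ ε s hs h
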